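/- Let q ∈ [1,∞), d, m ∈ ℕ, μ : ℝ^d → ℝ^d and σ : ℝ^d → ℝ^{d×m}, and define Φ(x,t,y) = (μ(x)t + σ(x)y)/(1 + ‖μ(x)t + σ(x)y‖^q) for t ∈ (0,∞), x ∈ ℝ^d, y ∈ ℝ^m. Then ‖((∂/∂y)Φ)(x,t,y) − σ(x)‖_{HS} ≤ (q+1)·‖μ(x)t + σ(x)y‖^q · ‖σ(x)‖_{HS} for all x, t, y. -/

import Mathlib

/-!
With `v(w) = μ(x) t + σ(x) w`, the map is `Φ = T ∘ v` for the taming map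
`T(v) = (1 + ‖v‖^q)⁻¹ • v` on `ℝ^d` with its Euclidean norm, so
`∂Φ/∂y − σ(x) = (DT(v) − I) σ(x)` and, column by column, its Hilbert–Schmidt norm is at most
`sup_{‖u‖ ≤ 1} ‖DT(v) u − u‖ · ‖σ(x)‖_HS`. For `v ≠ 0`,
`DT(v) − I = ((1 + ‖v‖^q)⁻¹ − 1) I + (radial rank-one term)`: the first coefficient is at most
`‖v‖^q`, and the rank-one term, from differentiating `(1 + ‖v‖^q)⁻¹`, has norm at most
`q ‖v‖^(q-1) / (1 + ‖v‖^q)² · ‖v‖ ≤ q ‖v‖^q` because the norm is `1`-Lipschitz.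
At `v = 0` the error `T(h) − h` is `O(‖h‖^(q+1))`, so `DT(0) = I` and both sides vanish.
-/

open Filter Topology Asymptotics

theorem abs_inv_one_add_sub_one_le {a : ℝ} (ha : 0 ≤ a) : |(1 + a)⁻¹ - 1| ≤ a := by
  have h : (1 + a)⁻¹ - 1 = -(a / (1 + a)) := by field_simp; ring
  rw [h, abs_neg, abs_of_nonneg (by positivity)]
  exact div_le_self ha (by linarith)

section NormedSpace

variable {E : Type*} [NormedAddCommGroup E] [NormedSpace ℝ E] {q : ℝ}

noncomputable def taming (q : ℝ) (v : E) : E := (1 + ‖v‖ ^ q)⁻¹ • v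

theorem hasFDerivAt_taming_zero (hq : 0 < q) :
    HasFDerivAt (taming q) (ContinuousLinearMap.id ℝ E) 0 := by
  refine .of_isLittleO ?_
  have hsmall : (fun h : E => ‖h‖ ^ q) =o[𝓝 0] (fun _ => (1 : ℝ)) := by
    rw [isLittleO_one_iff]
    simpa [Real.zero_rpow hq.ne'] using
      (continuous_norm.tendsto (0 : E)).rpow_const (Or.inr hq.le)
  have hlin : (fun h : E => ‖h‖ ^ q * ‖h‖) =o[𝓝 0] (fun h => h - 0) := by
    rw [← isLittleO_norm_right]
    simpa only [one_mul, sub_zero] using hsmall.mul_isBigO (isBigO_refl (fun h : E => ‖h‖) _)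
  refine (IsBigO.of_bound 1 (Eventually.of_forall fun h => ?_)).trans_isLittleO hlin
  have hq0 : 0 ≤ ‖h‖ ^ q := Real.rpow_nonneg (norm_nonneg h) q
  calc ‖taming q h - taming q 0 - ContinuousLinearMap.id ℝ E (h - 0)‖
        = |(1 + ‖h‖ ^ q)⁻¹ - 1| * ‖h‖ := by
        rw [taming, taming, smul_zero, sub_zero, sub_zero, ContinuousLinearMap.id_apply,
          ← Real.norm_eq_abs, ← norm_smul, sub_smul, one_smul]
    _ ≤ ‖h‖ ^ q * ‖h‖ := by gcongr; exact abs_inv_one_add_sub_one_le hq0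
    _ = 1 * ‖‖h‖ ^ q * ‖h‖‖ := by
        rw [one_mul, Real.norm_eq_abs, abs_of_nonneg (by positivity)]

theorem hasFDerivAt_taming {v : E} (hv : v ≠ 0) (hd : DifferentiableAt ℝ (‖·‖) v) :
    HasFDerivAt (taming q)
      ((1 + ‖v‖ ^ q)⁻¹ • ContinuousLinearMap.id ℝ E
        + ((-(q * ‖v‖ ^ (q - 1)) / (1 + ‖v‖ ^ q) ^ 2) • fderiv ℝ (‖·‖) v).smulRight v)
      v := by
  have hN : ‖v‖ ≠ 0 := norm_ne_zero_iff.2 hv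
  have hden : 1 + ‖v‖ ^ q ≠ 0 := by positivity
  have hscalar := ((Real.hasDerivAt_rpow_const (p := q) (Or.inl hN)).const_add 1).inv hden
  exact (hscalar.comp_hasFDerivAt v hd.hasFDerivAt).smul (hasFDerivAt_id v)

theorem norm_fderiv_taming_apply_sub_le_of_differentiableAt {v : E} (hq : 0 ≤ q) (hv : v ≠ 0)
    (hd : DifferentiableAt ℝ (‖·‖) v) (u : E) :
    ‖fderiv ℝ (taming q) v u - u‖ ≤ (q + 1) * ‖v‖ ^ q * ‖u‖ := by
  rw [(hasFDerivAt_taming hv hd).fderiv]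
  set N := ‖v‖
  set c := -(q * N ^ (q - 1)) / (1 + N ^ q) ^ 2
  set n' := fderiv ℝ (‖·‖) v
  have hN : 0 < N := norm_pos_iff.2 hv
  have hNq : 0 ≤ N ^ q := Real.rpow_nonneg hN.le q
  have hn' : ‖n' u‖ ≤ ‖u‖ := by
    simpa using n'.le_of_opNorm_le (norm_fderiv_le_of_lipschitz ℝ lipschitzWith_one_norm) u
  have hc : |c| * N ≤ q * N ^ q := by
    rw [abs_div, abs_neg, abs_of_nonneg (by positivity), abs_of_nonneg (by positivity),
      div_mul_eq_mul_div, mul_assoc, ← Real.rpow_add_one hN.ne', sub_add_cancel]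
    exact div_le_self (by positivity) (by nlinarith)
  simp only [add_apply, smul_apply, ContinuousLinearMap.id_apply,
    ContinuousLinearMap.smulRight_apply, smul_eq_mul]
  calc _ = ‖((1 + N ^ q)⁻¹ - 1) • u + (c * n' u) • v‖ := by
        rw [sub_smul, one_smul, sub_add_eq_add_sub]
    _ ≤ |(1 + N ^ q)⁻¹ - 1| * ‖u‖ + |c| * N * ‖n' u‖ := by
        refine (norm_add_le _ _).trans_eq ?_
        rw [norm_smul, norm_smul, norm_mul, Real.norm_eq_abs, Real.norm_eq_abs]
        ring
    _ ≤ N ^ q * ‖u‖ + q * N ^ q * ‖u‖ := by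
        gcongr
        exact abs_inv_one_add_sub_one_le hNq
    _ = (q + 1) * N ^ q * ‖u‖ := by ring

end NormedSpace

section InnerProductSpace

variable {E : Type*} [NormedAddCommGroup E] [InnerProductSpace ℝ E] {q : ℝ}

theorem differentiableAt_taming (hq : 0 < q) (v : E) : DifferentiableAt ℝ (taming q) v := by
  rcases eq_or_ne v 0 with rfl | hv
  · exact (hasFDerivAt_taming_zero hq).differentiableAt
  · exact (hasFDerivAt_taming hv
      ((contDiffAt_norm ℝ hv).differentiableAt one_ne_zero)).differentiableAt

theorem norm_fderiv_taming_apply_sub_le (hq : 0 < q) (v u : E) :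
    ‖fderiv ℝ (taming q) v u - u‖ ≤ (q + 1) * ‖v‖ ^ q * ‖u‖ := by
  rcases eq_or_ne v 0 with rfl | hv
  · simp [(hasFDerivAt_taming_zero hq).fderiv, Real.zero_rpow hq.ne']
  · exact norm_fderiv_taming_apply_sub_le_of_differentiableAt hq.le hv
      ((contDiffAt_norm ℝ hv).differentiableAt one_ne_zero) u

end InnerProductSpace

theorem sqrt_sum_sum_sq_le_of_norm_le {ι κ : Type*} [Fintype ι] [Fintype κ]
    {f g : κ → EuclideanSpace ℝ ι} {C : ℝ} (hC : 0 ≤ C) (h : ∀ j, ‖f j‖ ≤ C * ‖g j‖) :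
    √(∑ i, ∑ j, f j i ^ 2) ≤ C * √(∑ i, ∑ j, g j i ^ 2) := by
  have hcols (f : κ → EuclideanSpace ℝ ι) : ∑ i, ∑ j, f j i ^ 2 = ∑ j, ‖f j‖ ^ 2 := by
    simp only [Finset.sum_comm (γ := ι), EuclideanSpace.real_norm_sq_eq]
  rw [hcols, hcols, ← Real.sqrt_sq hC, ← Real.sqrt_mul (sq_nonneg C), Finset.mul_sum]
  gcongr with j
  rw [← mul_pow]
  exact pow_le_pow_left₀ (norm_nonneg _) (h j) 2

theorem tamed_increment_space_derivative_bound_general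
    (d m : ℕ) (q : ℝ) (hq : 1 ≤ q)
    (μ : (Fin d → ℝ) → (Fin d → ℝ)) (σ : (Fin d → ℝ) → Matrix (Fin d) (Fin m) ℝ)
    (x : Fin d → ℝ) (t : ℝ) (y : Fin m → ℝ) :
    Real.sqrt (∑ i, ∑ j,
        ((fderiv ℝ (fun w : Fin m → ℝ =>
            (1 + Real.sqrt (∑ k, (μ x k * t + (σ x).mulVec w k) ^ 2) ^ q)⁻¹
              • (fun k => μ x k * t + (σ x).mulVec w k) : (Fin m → ℝ) → (Fin d → ℝ)) y)
            (Pi.single j 1) i - σ x i j) ^ 2)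
      ≤ (q + 1) * Real.sqrt (∑ k, (μ x k * t + (σ x).mulVec y k) ^ 2) ^ q
          * Real.sqrt (∑ i, ∑ j, (σ x i j) ^ 2) := by
  have hq0 : 0 < q := by linarith
  set e := EuclideanSpace.equiv (Fin d) ℝ
  set B : (Fin m → ℝ) →L[ℝ] EuclideanSpace ℝ (Fin d) :=
    e.symm.toContinuousLinearMap.comp (Matrix.toLin' (σ x)).toContinuousLinearMap
  set v : (Fin m → ℝ) → EuclideanSpace ℝ (Fin d) :=
    fun w => e.symm (fun k => μ x k * t) + B w
  have hnorm (w : Fin m → ℝ) :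
      ‖v w‖ = √(∑ k, (μ x k * t + (σ x).mulVec w k) ^ 2) := by
    simp [v, B, e, EuclideanSpace.norm_eq]
  have hΦ : (fun w : Fin m → ℝ =>
      (1 + Real.sqrt (∑ k, (μ x k * t + (σ x).mulVec w k) ^ 2) ^ q)⁻¹
        • (fun k => μ x k * t + (σ x).mulVec w k) : (Fin m → ℝ) → (Fin d → ℝ))
      = e ∘ taming q ∘ v := by
    funext w
    have hev : e (v w) = fun k => μ x k * t + (σ x).mulVec w k := rfl
    simp only [Function.comp_apply, taming, map_smul, hev, hnorm]
  have hv : HasFDerivAt v B y := B.hasFDerivAt.const_add _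
  have hD := e.hasFDerivAt.comp y ((differentiableAt_taming hq0 (v y)).hasFDerivAt.comp y hv)
  have hcol (j : Fin m) (i : Fin d) : B (Pi.single j 1) i = σ x i j := by
    simp [B, e]
  rw [hΦ, hD.fderiv, ← hnorm]
  have hbound := sqrt_sum_sum_sq_le_of_norm_le (by positivity)
    (fun j => norm_fderiv_taming_apply_sub_le hq0 (v y) (B (Pi.single j 1)))
  simp only [PiLp.sub_apply, hcol] at hbound
  exact hbound

/-- For the increment-tamed map `Φ(x,t,y) = (μ(x)t + σ(x)y)/(1 + ‖μ(x)t + σ(x)y‖^q)`,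
the Jacobian in `y` satisfies `‖(∂Φ/∂y)(x,t,y) − σ(x)‖_HS ≤ (q+1) ‖μ(x)t + σ(x)y‖^q ‖σ(x)‖_HS`. -/
theorem tamed_increment_space_derivative_bound
    (d m : ℕ) (q : ℝ) (hq : 1 ≤ q)
    (μ : (Fin d → ℝ) → (Fin d → ℝ)) (σ : (Fin d → ℝ) → Matrix (Fin d) (Fin m) ℝ)
    (x : Fin d → ℝ) (t : ℝ) (ht : 0 < t) (y : Fin m → ℝ) :
    Real.sqrt (∑ i, ∑ j,
        ((fderiv ℝ (fun w : Fin m → ℝ =>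
            (1 + Real.sqrt (∑ k, (μ x k * t + (σ x).mulVec w k) ^ 2) ^ q)⁻¹
              • (fun k => μ x k * t + (σ x).mulVec w k) : (Fin m → ℝ) → (Fin d → ℝ)) y)
            (Pi.single j 1) i - σ x i j) ^ 2)
      ≤ (q + 1) * Real.sqrt (∑ k, (μ x k * t + (σ x).mulVec y k) ^ 2) ^ q
          * Real.sqrt (∑ i, ∑ j, (σ x i j) ^ 2) :=
  tamed_increment_space_derivative_bound_general d m q hq μ σ x t y
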